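/- Let Γ_N be N×N positive semidefinite Hermitian matrices such that the empirical spectral distributions μ^{Γ_N} = (1/N)∑_{k=1}^N δ_{λ_k(Γ_N)} form a tight sequence of probability measures on [0,∞), λ_max(Γ_N) → ∞, limsup_N λ₂(Γ_N)/λ_max(Γ_N) < 1, and N/n → r ∈ (0,∞). Then β_N := (1/n) ∑_{k=2}^N λ_k(Γ_N)/(λ_max(Γ_N) − λ_k(Γ_N)) → 0 as N, n → ∞. -/
import Mathlib


open Matrix Filter
open scoped ComplexOrder

set_option maxHeartbeats 1000000 in
/-- Under tightness of the empirical spectral distributions of `Γ_N`,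
`λ_max(Γ_N) → ∞`, the spectral gap condition `limsup λ₂/λ_max < 1`, and
`N/n → r ∈ (0,∞)`, the quantity
`β_N = (1/n) ∑_{k=2}^N λ_k(Γ_N)/(λ_max(Γ_N) − λ_k(Γ_N))` tends to `0`.

Here `ev N k` denotes the `(k+1)`-th largest eigenvalue of `Γ_N` (eigenvalues
listed in decreasing order), so `ev N 0 = λ_max(Γ_N)`, `ev N 1 = λ₂(Γ_N)`, and
the sum over `k = 2, …, N` (1-based) is the sum over indices `1, …, N−1`. -/
theorem stmt1 (Γ : ∀ N : ℕ, Matrix (Fin N) (Fin N) ℂ)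
    (hΓ : ∀ N, (Γ N).PosSemidef)
    (ev : ℕ → ℕ → ℝ)
    -- `ev N` enumerates the eigenvalues of `Γ_N` …
    (hev : ∀ N, ∃ σ : Equiv.Perm (Fin N), ∀ k : Fin N,
      ev N k = (hΓ N).1.eigenvalues (σ k))
    -- … in decreasing order
    (hmono : ∀ N, ∀ j k : ℕ, j ≤ k → k < N → ev N k ≤ ev N j)
    -- tightness of the empirical spectral distributions
    (htight : ∀ ε : ℝ, 0 < ε → ∃ M : ℝ, 0 < M ∧ ∀ N : ℕ, 0 < N →
      (((Finset.range N).filter fun k => M < ev N k).card : ℝ) / N < ε)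
    -- `λ_max(Γ_N) → ∞`
    (hmax : Tendsto (fun N => ev N 0) atTop atTop)
    -- spectral gap condition
    (hgap : Filter.limsup (fun N => ev N 1 / ev N 0) atTop < 1)
    (n : ℕ → ℕ) (r : ℝ) (hr : 0 < r)
    -- `N/n → r`
    (hratio : Tendsto (fun N : ℕ => (N : ℝ) / (n N : ℝ)) atTop (nhds r)) :
    Tendsto (fun N => (1 / (n N : ℝ)) *
        ∑ k ∈ Finset.Icc 1 (N - 1), ev N k / (ev N 0 - ev N k))
      atTop (nhds 0) := by
  -- eigenvalues are nonnegative
  have hnn : ∀ N k, k < N → 0 ≤ ev N k := by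
    intro N k hk
    obtain ⟨σ, hσ⟩ := hev N
    have h2 : ev N k = (hΓ N).1.eigenvalues (σ ⟨k, hk⟩) := hσ ⟨k, hk⟩
    rw [h2]
    exact (hΓ N).eigenvalues_nonneg _
  -- the spectral gap constant
  obtain ⟨δ, hδ0, hδ1, heventδ⟩ :
      ∃ δ : ℝ, 0 < δ ∧ δ < 1 ∧ ∀ᶠ N in atTop, ev N 1 / ev N 0 < δ := by
    set L := Filter.limsup (fun N => ev N 1 / ev N 0) atTop with hL
    have hmax01 : max L 0 < 1 := max_lt hgap one_pos
    have h0 : (0:ℝ) ≤ max L 0 := le_max_right _ _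
    have hLm : L ≤ max L 0 := le_max_left _ _
    refine ⟨(max L 0 + 1) / 2, by linarith, by linarith, ?_⟩
    have hbd : IsBoundedUnder (· ≤ ·) atTop (fun N => ev N 1 / ev N 0) := by
      apply Filter.isBoundedUnder_of_eventually_le (a := 1)
      filter_upwards [eventually_ge_atTop 2, hmax.eventually_ge_atTop 1] with N hN2 hN1
      have h10 : ev N 1 ≤ ev N 0 := hmono N 0 1 (by norm_num) (by omega)
      exact (div_le_one (by linarith)).2 h10
    exact Filter.eventually_lt_of_limsup_lt (by linarith) hbd
  rw [NormedAddCommGroup.tendsto_nhds_zero]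
  intro ε' hε'
  obtain ⟨ε, hεpos, hfinal⟩ : ∃ ε : ℝ, 0 < ε ∧ (r + 1) * ((ε + ε) / (1 - δ)) = ε' / 2 := by
    refine ⟨ε' * (1 - δ) / (4 * (r + 1)), ?_, ?_⟩
    · exact div_pos (mul_pos hε' (by linarith)) (by linarith)
    · have e3 : (1:ℝ) - δ ≠ 0 := by linarith
      have e4 : r + 1 ≠ 0 := by linarith
      field_simp
      ring
  obtain ⟨M, hM0, hMc⟩ := htight ε hεpos
  filter_upwards [heventδ, hmax.eventually_ge_atTop (max 1 (M / ε)),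
    hratio.eventually (eventually_le_nhds (lt_add_one r)),
    hratio.eventually (eventually_gt_nhds (half_lt_self hr)),
    eventually_ge_atTop 2] with N hA hB hC hD hN2
  set l : ℝ := ev N 0 with hl
  have hl1 : (1:ℝ) ≤ l := le_trans (le_max_left _ _) hB
  have hl0 : (0:ℝ) < l := by linarith
  have hn0 : (0:ℝ) < (n N : ℝ) := by
    rcases Nat.eq_zero_or_pos (n N) with h | h
    · rw [h] at hD; norm_num at hD; linarith
    · exact_mod_cast h
  have hMl : M / l ≤ ε := by
    have hMε : M / ε ≤ l := le_trans (le_max_right _ _) hB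
    rw [div_le_iff₀ hl0]
    rw [div_le_iff₀ hεpos] at hMε
    nlinarith
  have h1lt : ev N 1 < δ * l := (div_lt_iff₀ hl0).1 hA
  have hkle : ∀ k, 1 ≤ k → k < N → ev N k ≤ δ * l := fun k h1 h2 =>
    (hmono N 1 k h1 h2).trans h1lt.le
  have hdenpos : (0:ℝ) < (1 - δ) * l := mul_pos (by linarith) hl0
  have hmem : ∀ k ∈ Finset.Icc 1 (N - 1), 1 ≤ k ∧ k < N := by
    intro k hk
    rw [Finset.mem_Icc] at hk
    omega
  -- nonnegativity of the whole expression
  have hsum_nonneg : 0 ≤ ∑ k ∈ Finset.Icc 1 (N - 1), ev N k / (l - ev N k) := by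
    apply Finset.sum_nonneg
    intro k hk
    obtain ⟨hk1, hkN⟩ := hmem k hk
    have hden : (1 - δ) * l ≤ l - ev N k := by
      have := hkle k hk1 hkN; linarith [this]
    exact div_nonneg (hnn N k hkN) (by linarith)
  have hβ0 : 0 ≤ (1 / (n N : ℝ)) * ∑ k ∈ Finset.Icc 1 (N - 1), ev N k / (l - ev N k) :=
    mul_nonneg (by positivity) hsum_nonneg
  rw [Real.norm_of_nonneg hβ0]
  -- sum bound
  have hcard : (((Finset.Icc 1 (N - 1)).filter fun k => M < ev N k).card : ℝ) ≤ ε * N := by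
    have hsub : (Finset.Icc 1 (N - 1)).filter (fun k => M < ev N k) ⊆
        (Finset.range N).filter (fun k => M < ev N k) := by
      apply Finset.filter_subset_filter
      intro k hk
      rw [Finset.mem_Icc] at hk
      rw [Finset.mem_range]
      omega
    have h1 : (((Finset.Icc 1 (N - 1)).filter fun k => M < ev N k).card : ℝ) ≤
        (((Finset.range N).filter fun k => M < ev N k).card : ℝ) := by
      exact_mod_cast Finset.card_le_card hsub
    have h2 := hMc N (by omega)
    rw [div_lt_iff₀ (by positivity : (0:ℝ) < (N:ℝ))] at h2
    linarith
  have hsumS : ∑ k ∈ Finset.Icc 1 (N - 1), ev N k ≤ ε * N * (δ * l) + N * M := by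
    calc ∑ k ∈ Finset.Icc 1 (N - 1), ev N k
        ≤ ∑ k ∈ Finset.Icc 1 (N - 1), (if M < ev N k then δ * l else M) := by
          apply Finset.sum_le_sum
          intro k hk
          obtain ⟨hk1, hkN⟩ := hmem k hk
          split_ifs with h
          · exact hkle k hk1 hkN
          · exact le_of_not_gt h
      _ = (((Finset.Icc 1 (N - 1)).filter fun k => M < ev N k).card : ℝ) * (δ * l)
            + (((Finset.Icc 1 (N - 1)).filter fun k => ¬ M < ev N k).card : ℝ) * M := by
          rw [Finset.sum_ite, Finset.sum_const, Finset.sum_const]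
          simp [nsmul_eq_mul]
      _ ≤ ε * N * (δ * l) + N * M := by
          apply add_le_add
          · exact mul_le_mul_of_nonneg_right hcard (by positivity)
          · apply mul_le_mul_of_nonneg_right _ hM0.le
            have : ((Finset.Icc 1 (N - 1)).filter fun k => ¬ M < ev N k).card ≤ N := by
              calc ((Finset.Icc 1 (N - 1)).filter fun k => ¬ M < ev N k).card
                  ≤ (Finset.Icc 1 (N - 1)).card := Finset.card_filter_le _ _
                _ ≤ N := by rw [Nat.card_Icc]; omega
            exact_mod_cast this
  -- combine
  have key : (1 / (n N : ℝ)) * ∑ k ∈ Finset.Icc 1 (N - 1), ev N k / (l - ev N k)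
      ≤ (1 / (n N : ℝ)) * ((ε * N * (δ * l) + N * M) / ((1 - δ) * l)) := by
    apply mul_le_mul_of_nonneg_left _ (by positivity)
    calc ∑ k ∈ Finset.Icc 1 (N - 1), ev N k / (l - ev N k)
        ≤ ∑ k ∈ Finset.Icc 1 (N - 1), ev N k / ((1 - δ) * l) := by
          apply Finset.sum_le_sum
          intro k hk
          obtain ⟨hk1, hkN⟩ := hmem k hk
          have hden : (1 - δ) * l ≤ l - ev N k := by
            have := hkle k hk1 hkN; linarith
          exact div_le_div_of_nonneg_left (hnn N k hkN) hdenpos hden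
      _ = (∑ k ∈ Finset.Icc 1 (N - 1), ev N k) / ((1 - δ) * l) := by
          rw [Finset.sum_div]
      _ ≤ (ε * N * (δ * l) + N * M) / ((1 - δ) * l) := by
          gcongr
  have heq : (1 / (n N : ℝ)) * ((ε * N * (δ * l) + N * M) / ((1 - δ) * l))
      = ((N : ℝ) / (n N : ℝ)) * ((ε * δ + M / l) / (1 - δ)) := by
    have e1 : (n N : ℝ) ≠ 0 := ne_of_gt hn0
    have e2 : l ≠ 0 := ne_of_gt hl0
    have e3 : (1:ℝ) - δ ≠ 0 := by linarith
    field_simp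
  have hstep : ((N : ℝ) / (n N : ℝ)) * ((ε * δ + M / l) / (1 - δ))
      ≤ (r + 1) * ((ε + ε) / (1 - δ)) := by
    have h1 : ε * δ + M / l ≤ ε + ε := by
      have : ε * δ ≤ ε := by nlinarith
      linarith
    have h2 : (ε * δ + M / l) / (1 - δ) ≤ (ε + ε) / (1 - δ) := by
      gcongr
    have h3 : (0:ℝ) ≤ (ε * δ + M / l) / (1 - δ) := by
      apply div_nonneg _ (by linarith)
      have : 0 ≤ M / l := div_nonneg hM0.le hl0.le
      nlinarith
    have h4 : (0:ℝ) ≤ (N : ℝ) / (n N : ℝ) := by positivity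
    calc ((N : ℝ) / (n N : ℝ)) * ((ε * δ + M / l) / (1 - δ))
        ≤ (r + 1) * ((ε * δ + M / l) / (1 - δ)) :=
          mul_le_mul_of_nonneg_right hC h3
      _ ≤ (r + 1) * ((ε + ε) / (1 - δ)) :=
          mul_le_mul_of_nonneg_left h2 (by linarith)
  calc (1 / (n N : ℝ)) * ∑ k ∈ Finset.Icc 1 (N - 1), ev N k / (l - ev N k)
      ≤ (r + 1) * ((ε + ε) / (1 - δ)) := key.trans (heq ▸ hstep)
    _ = ε' / 2 := hfinal
    _ < ε' := by linarith
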